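/- Let B be an affine domain over an algebraically closed field k of characteristic 0 with a locally nilpotent derivation δ whose kernel A is a UFD, and assume B is faithfully flat over A. Then the plinth ideal δ(B) ∩ A is a principal ideal of A. -/

import Mathlib

/-! In a UFD an ideal closed under gcd's is generated by a nonzero element that is minimal for
divisibility, so it suffices that the plinth ideal `δ(B) ∩ A` is closed under gcd's. Write
`δ s₁ = d b₁`, `δ s₂ = d b₂` with `d` the gcd and `b₁, b₂` coprime. The kernel element
`d b₁ s₂ - d b₂ s₁` lies in `(d b₁, d b₂) B ∩ A = (d b₁, d b₂) A` by faithful flatness; cancelling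
`d` gives `b₁ (s₂ - x) = b₂ (s₁ + y)` in `B`. Flatness carries the coprimality of `b₁, b₂` over to
`B`, so `s₂ - x = b₂ c`, and then `δ c = d`. -/

theorem Module.Flat.exists_eq_smul_of_smul_eq_smul {R M : Type*} [CommRing R] [AddCommGroup M]
    [Module R M] [Module.Flat R M] {a b : R} (hab : ∀ t s : R, a * t = b * s → b ∣ t)
    {x y : M} (h : a • x = b • y) : ∃ c : M, x = b • c := by
  have hrel : ∑ i, ![a, -b] i • ![x, y] i = 0 := by
    simp [Fin.sum_univ_two, h]
  obtain ⟨k, m, z, hxz, hm⟩ := Module.Flat.iff_forall_isTrivialRelation.mp ‹_› hrel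
  have hdvd : ∀ j, b ∣ m 0 j := fun j => by
    have hj : a * m 0 j + -b * m 1 j = 0 := by simpa [Fin.sum_univ_two] using hm j
    exact hab _ (m 1 j) (by linear_combination hj)
  choose c hc using hdvd
  refine ⟨∑ j, c j • z j, ?_⟩
  simp only [Finset.smul_sum, smul_smul, ← hc]
  simpa using hxz 0

theorem Ideal.isPrincipal_of_gcd_mem {R : Type*} [CommRing R] [IsDomain R] [GCDMonoid R]
    [WfDvdMonoid R] (I : Ideal R) (hI : ∀ a ∈ I, ∀ b ∈ I, gcd a b ∈ I) : I.IsPrincipal := by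
  by_cases hbot : I = ⊥
  · exact hbot ▸ bot_isPrincipal
  obtain ⟨g, ⟨hgI, hg0⟩, hmin⟩ := wellFounded_dvdNotUnit.has_min
    {a : R | a ∈ I ∧ a ≠ 0} (Submodule.exists_mem_ne_zero_of_ne_bot hbot)
  suffices hdvd : ∀ q ∈ I, g ∣ q from
    ⟨g, le_antisymm (fun q hq => Ideal.mem_span_singleton.2 (hdvd q hq))
      ((Ideal.span_singleton_le_iff_mem I).2 hgI)⟩
  intro q hq
  have hgcd0 : gcd g q ≠ 0 := fun h => hg0 ((gcd_eq_zero_iff g q).1 h).1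
  have hg_dvd_gcd : g ∣ gcd g q := by
    by_contra hndvd
    exact hmin _ ⟨hI g hgI q hq, hgcd0⟩ (dvd_and_not_dvd_iff.1 ⟨gcd_dvd_left g q, hndvd⟩)
  exact hg_dvd_gcd.trans (gcd_dvd_right g q)

namespace Derivation

variable {R B : Type*} [CommRing R] [CommRing B] [IsDomain B] [Algebra R B]
  (δ : Derivation R B B) (A : Subalgebra R B)

theorem exists_apply_eq_of_apply_eq_mul (hA : ∀ b : B, b ∈ A ↔ δ b = 0)
    [Module.FaithfullyFlat A B] {s₁ s₂ : B} {d b₁ b₂ : A} (hd : d ≠ 0) (hb₂ : b₂ ≠ 0)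
    (hb : ∀ t s : A, b₁ * t = b₂ * s → b₂ ∣ t) (h₁ : δ s₁ = d * b₁) (h₂ : δ s₂ = d * b₂) :
    ∃ s : B, δ s = d := by
  have hδA : ∀ a : A, δ a = 0 := fun a => (hA a).1 a.2
  have hu : δ ((d * b₁ : A) * s₂ - (d * b₂ : A) * s₁) = 0 := by
    simp only [map_sub, leibniz, smul_eq_mul, hδA, h₁, h₂]
    push_cast
    ring
  obtain ⟨x, y, hxy⟩ : ∃ x y : A, x * (d * b₁) + y * (d * b₂) =
      ⟨(d * b₁ : A) * s₂ - (d * b₂ : A) * s₁, (hA _).2 hu⟩ := by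
    rw [← Ideal.mem_span_pair,
      ← Ideal.comap_map_eq_self_of_faithfullyFlat (B := B) (Ideal.span {d * b₁, d * b₂})]
    have hJ : ∀ a ∈ ({d * b₁, d * b₂} : Set A),
        (a : B) ∈ (Ideal.span {d * b₁, d * b₂}).map (algebraMap A B) :=
      fun a ha => Ideal.mem_map_of_mem _ (Ideal.subset_span ha)
    exact sub_mem (Ideal.mul_mem_right _ _ (hJ _ (by simp)))
      (Ideal.mul_mem_right _ _ (hJ _ (by simp)))
  have hxyB : (x * (d * b₁) + y * (d * b₂) : B) = d * b₁ * s₂ - d * b₂ * s₁ := by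
    simpa using congrArg Subtype.val hxy
  have hrel : b₁ • (s₂ - x) = b₂ • (s₁ + y) := by
    simp only [Subalgebra.smul_def, smul_eq_mul]
    refine mul_left_cancel₀ (by exact_mod_cast hd : (d : B) ≠ 0) ?_
    linear_combination -hxyB
  obtain ⟨c, hc⟩ := Module.Flat.exists_eq_smul_of_smul_eq_smul hb hrel
  have hδc : (d * b₂ : B) = b₂ * δ c := by
    simpa [hδA, h₂, Subalgebra.smul_def] using congrArg δ hc
  exact ⟨c, mul_left_cancel₀ (by exact_mod_cast hb₂ : (b₂ : B) ≠ 0) (by linear_combination -hδc)⟩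

theorem gcd_mem_of_mem_iff_exists_apply_eq (hA : ∀ b : B, b ∈ A ↔ δ b = 0) [GCDMonoid A]
    [Module.FaithfullyFlat A B] (P : Ideal A) (hP : ∀ x : A, x ∈ P ↔ ∃ b : B, δ b = x)
    {a₁ a₂ : A} (h₁ : a₁ ∈ P) (h₂ : a₂ ∈ P) : gcd a₁ a₂ ∈ P := by
  by_cases ha₂ : a₂ = 0
  · obtain ⟨u, hu⟩ := (gcd_zero_right' a₁).symm
    rw [ha₂, ← hu]
    exact P.mul_mem_right _ h₁
  obtain ⟨b₁, b₂, e₁, e₂, hunit⟩ := extract_gcd a₁ a₂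
  have hd : gcd a₁ a₂ ≠ 0 := fun h => ha₂ ((gcd_eq_zero_iff _ _).1 h).2
  have hb₂ : b₂ ≠ 0 := by
    rintro rfl
    exact ha₂ (by rw [e₂, mul_zero])
  have hb : ∀ t s : A, b₁ * t = b₂ * s → b₂ ∣ t := fun t s h =>
    (gcd_isUnit_iff_isRelPrime.1 hunit).symm.dvd_of_dvd_mul_left ⟨s, h⟩
  obtain ⟨s₁, hs₁⟩ := (hP a₁).1 h₁
  obtain ⟨s₂, hs₂⟩ := (hP a₂).1 h₂
  rw [e₁, Subalgebra.coe_mul] at hs₁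
  rw [e₂, Subalgebra.coe_mul] at hs₂
  exact (hP _).2 (exists_apply_eq_of_apply_eq_mul δ A hA hd hb₂ hb hs₁ hs₂)

end Derivation

theorem stmt9_general {k B : Type*} [Field k] [CommRing B] [IsDomain B] [Algebra k B]
    (δ : Derivation k B B) (A : Subalgebra k B) (hA : ∀ b : B, b ∈ A ↔ δ b = 0)
    [UniqueFactorizationMonoid A] [Module.FaithfullyFlat A B]
    (P : Ideal A) (hP : ∀ x : A, x ∈ P ↔ ∃ b : B, δ b = x) :
    P.IsPrincipal :=
  letI : GCDMonoid A := UniqueFactorizationMonoid.toGCDMonoid A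
  P.isPrincipal_of_gcd_mem fun _ ha _ hb => δ.gcd_mem_of_mem_iff_exists_apply_eq A hA P hP ha hb

/-- Lemma 2.1: if `B` is an affine domain over an algebraically closed field of
characteristic `0` with locally nilpotent derivation `δ`, the kernel `A` is a UFD,
and `B` is faithfully flat over `A`, then the plinth ideal `δ(B) ∩ A` is a
principal ideal of `A`. -/
theorem stmt9 {k B : Type*} [Field k] [IsAlgClosed k] [CharZero k]
    [CommRing B] [IsDomain B] [Algebra k B] [Algebra.FiniteType k B]
    (δ : Derivation k B B) (hln : ∀ b : B, ∃ n : ℕ, (⇑δ)^[n] b = 0)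
    (A : Subalgebra k B) (hA : ∀ b : B, b ∈ A ↔ δ b = 0)
    [UniqueFactorizationMonoid A] [Module.FaithfullyFlat A B]
    (P : Ideal A) (hP : ∀ x : A, x ∈ P ↔ ∃ b : B, δ b = x) :
    P.IsPrincipal :=
  stmt9_general δ A hA P hP
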